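/- Let p, s : Fin d → ℝ be strictly positive sequences that are similarly ordered, i.e. (s i - s j)(p i - p j) ≥ 0 for all i, j. Then (∑ i, s i / p i) / (∑ i, s i / (p i)^2) ≥ (∑ i, 1 / p i) / (∑ i, 1 / (p i)^2). -/
import Mathlib


open Finset

theorem trace_lower_bound (d : ℕ) (hd : 1 ≤ d)
    (p s : Fin d → ℝ)
    (hp : ∀ i, 0 < p i) (hs : ∀ i, 0 < s i)
    (hord : ∀ i j, 0 ≤ (s i - s j) * (p i - p j)) :
    (∑ i, 1 / p i) / (∑ i, 1 / (p i) ^ 2) ≤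
      (∑ i, s i / p i) / (∑ i, s i / (p i) ^ 2) := by
  have hne : (Finset.univ : Finset (Fin d)).Nonempty := by
    have : 0 < d := hd
    exact ⟨⟨0, this⟩, mem_univ _⟩
  have h1 : 0 < ∑ i, 1 / (p i) ^ 2 :=
    Finset.sum_pos (fun i _ => by have := hp i; positivity) hne
  have h2 : 0 < ∑ i, s i / (p i) ^ 2 :=
    Finset.sum_pos (fun i _ => by have := hs i; have := hp i; positivity) hne
  rw [div_le_div_iff₀ h1 h2]
  have key : 0 ≤ ∑ i, ∑ j, (s i - s j) / (p i * (p j) ^ 2) := by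
    have h2T : 0 ≤ ∑ i, ∑ j, ((s i - s j) / (p i * (p j) ^ 2)
        + (s j - s i) / (p j * (p i) ^ 2)) := by
      apply Finset.sum_nonneg; intro i _
      apply Finset.sum_nonneg; intro j _
      have hpi := hp i; have hpj := hp j
      have hord' := hord i j
      have : (s i - s j) / (p i * (p j) ^ 2) + (s j - s i) / (p j * (p i) ^ 2)
          = (s i - s j) * (p i - p j) / ((p i) ^ 2 * (p j) ^ 2) := by
        field_simp
        ring
      rw [this]
      positivity
    have hsymm : ∑ i, ∑ j, (s j - s i) / (p j * (p i) ^ 2)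
        = ∑ i, ∑ j, (s i - s j) / (p i * (p j) ^ 2) := Finset.sum_comm
    simp only [Finset.sum_add_distrib] at h2T
    rw [hsymm] at h2T
    linarith
  have expand : (∑ i, s i / p i) * (∑ i, 1 / (p i) ^ 2)
      - (∑ i, 1 / p i) * (∑ i, s i / (p i) ^ 2)
      = ∑ i, ∑ j, (s i - s j) / (p i * (p j) ^ 2) := by
    rw [Finset.sum_mul_sum, Finset.sum_mul_sum]
    rw [← Finset.sum_sub_distrib]
    apply Finset.sum_congr rfl; intro i _
    rw [← Finset.sum_sub_distrib]
    apply Finset.sum_congr rfl; intro j _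
    have hpi := (hp i).ne'; have hpj := (hp j).ne'
    field_simp
  linarith
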